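/- Let $N \geq 2$ and $c \in (0,1]$. Define $f_N(n,c)$ to be the minimum over all $S \subseteq \{0,\dots,N-1\}^n$ with $|S| \geq cN^n$ of $M(S)$, the largest $m$ such that $S$ contains the image of an injective affine map from $\{0,1\}^m$ into $\mathbb{Z}^n$. Then for all $n > \lceil \log_N(8c^{-2}) \rceil$, $f_N(n,c) \geq f_N\big(n - \lceil \log_N(8c^{-2}) \rceil,\ 2c^2(c+4)^{-2}\big) + 1$. -/

import Mathlib

open scoped BigOperators

/-- The 0/1 cube in `ℤ^m`. -/
def cube (m : ℕ) : Set (Fin m → ℤ) := {v | ∀ i, v i = 0 ∨ v i = 1}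

/-- `S` contains an affine copy of the `m`-dimensional 0/1 cube: there is a map
`ι` which is affine (of the form `y ↦ A y + z` on the cube), injective on the
cube, and whose image of the cube is contained in `S`. -/
def HasCube {n : ℕ} (S : Set (Fin n → ℤ)) (m : ℕ) : Prop :=
  ∃ ι : (Fin m → ℤ) → (Fin n → ℤ),
    (∃ A : Matrix (Fin n) (Fin m) ℤ, ∃ z : Fin n → ℤ, ∀ y ∈ cube m, ι y = A.mulVec y + z) ∧
    Set.InjOn ι (cube m) ∧ ι '' (cube m) ⊆ S

/-- `M(S)`: the largest `m` such that `S` contains an affine copy of the `m`-cube. -/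
noncomputable def Mval {n : ℕ} (S : Set (Fin n → ℤ)) : ℕ := sSup {m | HasCube S m}

/-- The box `{0,1,…,N-1}^n` inside `ℤ^n`. -/
noncomputable def box (N n : ℕ) : Finset (Fin n → ℤ) := Fintype.piFinset fun _ => Finset.Icc 0 ((N : ℤ) - 1)

/-- `f_N(n,c)`: the minimal value of `M(S)` over subsets `S` of the box of density at least `c`. -/
noncomputable def fN (N n : ℕ) (c : ℝ) : ℕ :=
  sInf {k | ∃ S : Finset (Fin n → ℤ), S ⊆ box N n ∧ c * (N : ℝ) ^ n ≤ S.card ∧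
    Mval (S : Set (Fin n → ℤ)) = k}

/-! Split `ℤ^(d+m) = ℤ^d × ℤ^m` and view `S` as the family of its fibres `S_x ⊆ [N]^m` over
`x ∈ [N]^d`. By Cauchy–Schwarz, `∑_{x,x'} |S_x ∩ S_{x'}| ≥ |S|² / N^m`; the diagonal contributes
only `|S|`, so as `N^d ≥ 8 / c²` some pair `x ≠ x'` has
`|S_x ∩ S_{x'}| ≥ (c² - c / N^d) N^m ≥ 2c² (c+4)⁻² N^m`. A cube in `S_x ∩ S_{x'}`, placed over
both `x` and `x'`, is a cube of one more dimension in `S`. -/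

open Set
open scoped Finset

theorem Fin.append_add_append {α : Type*} [Add α] {m n : ℕ} (a a' : Fin m → α) (b b' : Fin n → α) :
    Fin.append a b + Fin.append a' b' = Fin.append (a + a') (b + b') := by
  ext i
  refine Fin.addCases (fun i => ?_) (fun i => ?_) i <;> simp

section Cubes

variable {n m : ℕ}

theorem HasCube.mono {S S' : Set (Fin n → ℤ)} (h : HasCube S m) (hS : S ⊆ S') : HasCube S' m :=
  let ⟨ι, hι, hinj, hsub⟩ := h
  ⟨ι, hι, hinj, hsub.trans hS⟩

theorem hasCube_iff_exists_addMonoidHom {S : Set (Fin n → ℤ)} :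
    HasCube S m ↔ ∃ (L : (Fin m → ℤ) →+ (Fin n → ℤ)) (z : Fin n → ℤ),
      InjOn (fun y => L y + z) (cube m) ∧ MapsTo (fun y => L y + z) (cube m) S := by
  constructor
  · rintro ⟨ι, ⟨A, z, hι⟩, hinj, hsub⟩
    have heq : EqOn ι (fun y => A.mulVecLin.toAddMonoidHom y + z) (cube m) := hι
    exact ⟨A.mulVecLin.toAddMonoidHom, z, hinj.congr heq,
      (mapsTo_iff_image_subset.2 hsub).congr heq⟩
  · rintro ⟨L, z, hinj, hmaps⟩
    exact ⟨_, ⟨LinearMap.toMatrix' L.toIntLinearMap, z, fun y _ => by simp⟩, hinj,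
      hmaps.image_subset⟩

theorem hasCube_zero {S : Set (Fin n → ℤ)} (hS : S.Nonempty) : HasCube S 0 := by
  obtain ⟨s, hs⟩ := hS
  refine hasCube_iff_exists_addMonoidHom.2 ⟨0, s, fun y _ y' _ _ => Subsingleton.elim y y', ?_⟩
  intro y _
  simpa using hs

theorem hasCube_pair {x x' : Fin n → ℤ} (hx : x ≠ x') : HasCube {x, x'} 1 := by
  refine hasCube_iff_exists_addMonoidHom.2
    ⟨(LinearMap.proj 0 : (Fin 1 → ℤ) →ₗ[ℤ] ℤ).smulRight (x' - x) |>.toAddMonoidHom, x, ?_, ?_⟩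
  · intro y hy y' hy' h
    have : y 0 = y' 0 := smul_left_injective ℤ (sub_ne_zero.2 hx.symm) (add_right_cancel h)
    exact funext fun i => by rwa [Subsingleton.elim i 0]
  · intro y hy
    rcases hy 0 with h | h <;> simp [h]

theorem HasCube.append {d j k : ℕ} {U : Set (Fin d → ℤ)} {T : Set (Fin m → ℤ)}
    (hU : HasCube U j) (hT : HasCube T k) : HasCube (image2 Fin.append U T) (j + k) := by
  obtain ⟨L₁, z₁, hinj₁, hmaps₁⟩ := hasCube_iff_exists_addMonoidHom.1 hU
  obtain ⟨L₂, z₂, hinj₂, hmaps₂⟩ := hasCube_iff_exists_addMonoidHom.1 hT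
  let L : (Fin (j + k) → ℤ) →+ (Fin (d + m) → ℤ) :=
    AddMonoidHom.mk' (fun y => Fin.append (L₁ (y ∘ Fin.castAdd k)) (L₂ (y ∘ Fin.natAdd j)))
      fun y y' => by
        simp only [Fin.append_add_append, ← map_add]
        rfl
  have hL : ∀ y, L y + Fin.append z₁ z₂ =
      Fin.append (L₁ (y ∘ Fin.castAdd k) + z₁) (L₂ (y ∘ Fin.natAdd j) + z₂) := fun y =>
    Fin.append_add_append _ _ _ _
  have hleft : ∀ y ∈ cube (j + k), y ∘ Fin.castAdd k ∈ cube j := fun y hy i => hy _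
  have hright : ∀ y ∈ cube (j + k), y ∘ Fin.natAdd j ∈ cube k := fun y hy i => hy _
  refine hasCube_iff_exists_addMonoidHom.2 ⟨L, Fin.append z₁ z₂, ?_, ?_⟩
  · intro y hy y' hy' h
    simp only [hL] at h
    obtain ⟨h₁, h₂⟩ := Prod.ext_iff.1 <|
      (Fin.appendEquiv d m).injective (a₁ := (_, _)) (a₂ := (_, _)) h
    exact (Fin.appendEquiv j k).symm.injective <|
      Prod.ext (hinj₁ (hleft y hy) (hleft y' hy') h₁) (hinj₂ (hright y hy) (hright y' hy') h₂)
  · intro y hy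
    simp only [hL]
    exact mem_image2_of_mem (hmaps₁ (hleft y hy)) (hmaps₂ (hright y hy))

end Cubes

namespace Finset

variable {α β : Type*} [DecidableEq α] [DecidableEq β] {B : Finset α} {C : Finset β}
  {S : Finset (α × β)}

def fiber (S : Finset (α × β)) (C : Finset β) (x : α) : Finset β := {t ∈ C | (x, t) ∈ S}

theorem sum_card_fiber (hS : S ⊆ B ×ˢ C) : ∑ x ∈ B, #(S.fiber C x) = #S :=
  calc ∑ x ∈ B, #(S.fiber C x) = #{p ∈ B ×ˢ C | p ∈ S} := by
        simp only [fiber, card_filter, sum_product]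
    _ = #S := by rw [filter_mem_eq_inter, inter_eq_right.2 hS]

theorem sum_card_column (hS : S ⊆ B ×ˢ C) : ∑ t ∈ C, #{x ∈ B | (x, t) ∈ S} = #S :=
  calc ∑ t ∈ C, #{x ∈ B | (x, t) ∈ S} = #{p ∈ B ×ˢ C | p ∈ S} := by
        simp only [card_filter, sum_product_right]
    _ = #S := by rw [filter_mem_eq_inter, inter_eq_right.2 hS]

theorem sum_sum_card_fiber_inter :
    ∑ x ∈ B, ∑ x' ∈ B, #(S.fiber C x ∩ S.fiber C x') = ∑ t ∈ C, #{x ∈ B | (x, t) ∈ S} ^ 2 := by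
  simp only [fiber, ← filter_and, card_filter, sq, sum_mul_sum, ite_zero_mul_ite_zero, mul_one]
  exact (sum_congr rfl fun _ _ => sum_comm).trans sum_comm

theorem exists_ne_sq_card_le (hS : S ⊆ B ×ˢ C) (hB : 1 < #B) :
    ∃ x ∈ B, ∃ x' ∈ B, x ≠ x' ∧
      #S ^ 2 ≤ #C * (#S + #B ^ 2 * #(S.fiber C x ∩ S.fiber C x')) := by
  obtain ⟨a, ha, b, hb, hab⟩ := one_lt_card.1 hB
  obtain ⟨p, hp, hmax⟩ := B.offDiag.exists_max_image
    (fun p => #(S.fiber C p.1 ∩ S.fiber C p.2)) ⟨(a, b), mem_offDiag.2 ⟨ha, hb, hab⟩⟩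
  obtain ⟨hx, hx', hne⟩ := mem_offDiag.1 hp
  refine ⟨p.1, hx, p.2, hx', hne, ?_⟩
  set M := #(S.fiber C p.1 ∩ S.fiber C p.2)
  have hoff : ∑ x ∈ B, ∑ x' ∈ B.erase x, #(S.fiber C x ∩ S.fiber C x') ≤ #B ^ 2 * M :=
    calc _ ≤ ∑ x ∈ B, ∑ x' ∈ B.erase x, M := sum_le_sum fun x hx => sum_le_sum fun x' hx' =>
          hmax (x, x') (mem_offDiag.2 ⟨hx, mem_of_mem_erase hx', (ne_of_mem_erase hx').symm⟩)
      _ ≤ ∑ x ∈ B, ∑ x' ∈ B, M := sum_le_sum fun x _ => sum_le_sum_of_subset (erase_subset _ _)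
      _ = #B ^ 2 * M := by simp [sq, mul_assoc]
  calc #S ^ 2 = (∑ t ∈ C, #{x ∈ B | (x, t) ∈ S}) ^ 2 := by rw [sum_card_column hS]
    _ ≤ #C * ∑ t ∈ C, #{x ∈ B | (x, t) ∈ S} ^ 2 := sq_sum_le_card_mul_sum_sq
    _ = #C * ∑ x ∈ B, ∑ x' ∈ B, #(S.fiber C x ∩ S.fiber C x') := by
        rw [sum_sum_card_fiber_inter]
    _ = #C * (#S + ∑ x ∈ B, ∑ x' ∈ B.erase x, #(S.fiber C x ∩ S.fiber C x')) := by
        rw [← sum_card_fiber hS, ← sum_add_distrib]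
        congr 1
        refine sum_congr rfl fun x hx => ?_
        rw [← add_sum_erase _ _ hx, inter_self]
    _ ≤ #C * (#S + #B ^ 2 * M) := by gcongr

end Finset

theorem density_bound_of_sq_le {c u w s I : ℝ} (hc0 : 0 < c) (hc1 : c ≤ 1) (hw : 0 < w)
    (hu : 8 ≤ c ^ 2 * u) (hs : c * u * w ≤ s) (hsq : s ^ 2 ≤ w * (s + u ^ 2 * I)) :
    2 * c ^ 2 / (c + 4) ^ 2 * w ≤ I := by
  have hu0 : 0 < u := by nlinarith
  have hcu : 1 ≤ c * u := by nlinarith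
  -- `s ↦ s (s - w)` is increasing for `s ≥ w / 2`, and `s ≥ c u w ≥ w`.
  have hmono : c * u * w * (c * u * w - w) ≤ s * (s - w) :=
    mul_le_mul hs (by linarith) (by nlinarith) (by nlinarith)
  have hI : (c ^ 2 * u - c) * w ≤ u * I := by
    have : w * u * ((c ^ 2 * u - c) * w) ≤ w * u * (u * I) := by nlinarith
    exact le_of_mul_le_mul_left this (by positivity)
  have hK : 2 * c ^ 2 / (c + 4) ^ 2 ≤ c ^ 2 - c ^ 3 / 8 := by
    have h : 2 ≤ (1 - c / 8) * (c + 4) ^ 2 := by nlinarith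
    rw [div_le_iff₀ (by positivity)]
    linear_combination (c ^ 2) * h
  have hKu : u * (2 * c ^ 2 / (c + 4) ^ 2) ≤ c ^ 2 * u - c := by nlinarith
  refine le_of_mul_le_mul_left ?_ hu0
  nlinarith

section Density

variable {N n m d : ℕ} {c : ℝ}

theorem card_box : #(box N n) = N ^ n := by simp [_root_.box]

theorem append_mem_box {x : Fin d → ℤ} {t : Fin m → ℤ} :
    Fin.append x t ∈ box N (d + m) ↔ x ∈ box N d ∧ t ∈ box N m := by
  simp only [_root_.box, Fintype.mem_piFinset, Fin.forall_fin_add, Fin.append_left,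
    Fin.append_right]

theorem HasCube.two_pow_le_card {S : Finset (Fin n → ℤ)} (h : HasCube (S : Set (Fin n → ℤ)) m) :
    2 ^ m ≤ #S := by
  obtain ⟨ι, -, hinj, hsub⟩ := h
  have hcube : (Fintype.piFinset fun _ : Fin m => ({0, 1} : Finset ℤ) : Set (Fin m → ℤ)) =
      cube m := by
    ext
    simp [cube]
  calc 2 ^ m = #(Fintype.piFinset fun _ : Fin m => ({0, 1} : Finset ℤ)) := by simp
    _ ≤ #S :=
        Finset.card_le_card_of_injOn ι (fun y hy => hsub ⟨y, hcube ▸ hy, rfl⟩) (hcube ▸ hinj)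

theorem bddAbove_setOf_hasCube (S : Finset (Fin n → ℤ)) :
    BddAbove {m | HasCube (S : Set (Fin n → ℤ)) m} :=
  ⟨#S, fun _ hm => Nat.lt_two_pow_self.le.trans hm.two_pow_le_card⟩

theorem HasCube.le_Mval {S : Finset (Fin n → ℤ)} (h : HasCube (S : Set (Fin n → ℤ)) m) :
    m ≤ Mval (S : Set (Fin n → ℤ)) :=
  le_csSup (bddAbove_setOf_hasCube S) h

theorem hasCube_Mval {S : Finset (Fin n → ℤ)} (hS : S.Nonempty) :
    HasCube (S : Set (Fin n → ℤ)) (Mval (S : Set (Fin n → ℤ))) :=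
  Nat.sSup_mem ⟨0, hasCube_zero (Finset.coe_nonempty.2 hS)⟩ (bddAbove_setOf_hasCube S)

theorem fN_le_Mval {S : Finset (Fin n → ℤ)} (hS : S ⊆ box N n) (hc : c * N ^ n ≤ #S) :
    fN N n c ≤ Mval (S : Set (Fin n → ℤ)) :=
  Nat.sInf_le ⟨S, hS, hc, rfl⟩

theorem le_fN (hc : c ≤ 1) {k : ℕ}
    (h : ∀ S ⊆ box N n, c * N ^ n ≤ #S → k ≤ Mval (S : Set (Fin n → ℤ))) : k ≤ fN N n c := by
  refine le_csInf ⟨_, box N n, subset_rfl, ?_, rfl⟩ ?_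
  · rw [card_box, Nat.cast_pow]
    exact mul_le_of_le_one_left (by positivity) hc
  · rintro _ ⟨S, hS, hcS, rfl⟩
    exact h S hS hcS

theorem exists_large_common_fiber {S : Finset (Fin (d + m) → ℤ)} (hS : S ⊆ box N (d + m))
    (hN : 1 < N ^ d) :
    ∃ x x' : Fin d → ℤ, x ≠ x' ∧ ∃ T ⊆ box N m,
      #S ^ 2 ≤ N ^ m * (#S + (N ^ d) ^ 2 * #T) ∧
      image2 Fin.append {x, x'} (T : Set (Fin m → ℤ)) ⊆ (S : Set (Fin (d + m) → ℤ)) := by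
  let e := Fin.appendEquiv (α := ℤ) d m
  let S' := S.map e.symm.toEmbedding
  have hmem : ∀ x t, (x, t) ∈ S' ↔ Fin.append x t ∈ S := fun x t => Finset.mem_map_equiv
  have hS' : S' ⊆ box N d ×ˢ box N m := by
    rintro ⟨x, t⟩ h
    exact Finset.mem_product.2 (append_mem_box.1 (hS ((hmem x t).1 h)))
  obtain ⟨x, -, x', -, hne, hsq⟩ := Finset.exists_ne_sq_card_le hS' (by rwa [card_box])
  refine ⟨x, x', hne, S'.fiber (box N m) x ∩ S'.fiber (box N m) x',
    Finset.inter_subset_left.trans (Finset.filter_subset _ _), ?_, ?_⟩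
  · simpa [S', card_box] using hsq
  · rintro _ ⟨y, hy, t, ht, rfl⟩
    simp only [Finset.coe_inter, Set.mem_inter_iff, Finset.mem_coe, Finset.fiber,
      Finset.mem_filter, hmem] at ht
    rcases hy with rfl | rfl
    exacts [ht.1.2, ht.2.2]

theorem fN_add_one_le (hc0 : 0 < c) (hc1 : c ≤ 1) (hd : 8 ≤ c ^ 2 * N ^ d) :
    fN N m (2 * c ^ 2 / (c + 4) ^ 2) + 1 ≤ fN N (d + m) c := by
  refine le_fN hc1 fun S hS hcS => ?_
  have hNd : 1 < N ^ d := by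
    have : (1 : ℝ) < N ^ d := by nlinarith
    exact_mod_cast this
  have hN : (0 : ℝ) < N := by
    have : 0 < N := Nat.pos_of_ne_zero (by rintro rfl; rcases d with _ | d <;> simp at hNd)
    exact_mod_cast this
  obtain ⟨x, x', hne, T, hT, hsq, hsub⟩ := exists_large_common_fiber hS hNd
  have hTcard : 2 * c ^ 2 / (c + 4) ^ 2 * N ^ m ≤ #T := by
    refine density_bound_of_sq_le (s := #S) hc0 hc1 (by positivity) hd ?_
      (by exact_mod_cast hsq)
    rwa [pow_add, ← mul_assoc] at hcS
  have hTne : T.Nonempty := by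
    rw [← Finset.card_pos, ← Nat.cast_pos (α := ℝ)]
    exact lt_of_lt_of_le (by positivity) hTcard
  calc fN N m (2 * c ^ 2 / (c + 4) ^ 2) + 1 ≤ Mval (T : Set (Fin m → ℤ)) + 1 := by
        gcongr
        exact fN_le_Mval hT hTcard
    _ ≤ Mval (S : Set (Fin (d + m) → ℤ)) := by
        rw [add_comm]
        exact (((hasCube_pair hne).append (hasCube_Mval hTne)).mono hsub).le_Mval

end Density

theorem stmt5 (N : ℕ) (hN : 2 ≤ N) (c : ℝ) (hc0 : 0 < c) (hc1 : c ≤ 1) (n : ℕ)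
    (hn : ⌈Real.logb N (8 / c ^ 2)⌉₊ < n) :
    fN N (n - ⌈Real.logb N (8 / c ^ 2)⌉₊) (2 * c ^ 2 / (c + 4) ^ 2) + 1 ≤ fN N n c := by
  set d := ⌈Real.logb N (8 / c ^ 2)⌉₊
  have hd : 8 ≤ c ^ 2 * N ^ d := by
    have hN1 : (1 : ℝ) < N := by exact_mod_cast hN
    have h := (Real.logb_le_iff_le_rpow hN1 (by positivity)).1
      (Nat.le_ceil (Real.logb N (8 / c ^ 2)))
    rw [Real.rpow_natCast, div_le_iff₀ (by positivity)] at h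
    linarith
  obtain ⟨m, rfl⟩ := Nat.exists_eq_add_of_le hn.le
  rw [Nat.add_sub_cancel_left]
  exact fN_add_one_le hc0 hc1 hd
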